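/- arXiv:0903.1476 — 3 statements merged into one kernel-verified Lean document; each statement's English description precedes it below -/
import Mathlib

section
/- Let 𝒫_Ω, 𝒫_T be orthogonal projections on the space of n × n matrices with Frobenius inner product, 0 < p < 1, and set 𝒬_Ω := p^{−1} 𝒫_Ω − 𝒾. Suppose ‖𝒫_T 𝒬_Ω 𝒫_T‖ ≤ a in operator norm (with respect to Frobenius norm), where 0 ≤ a. Then ‖𝒬_Ω 𝒫_T‖² ≤ (a + 1)/p. -/
open Matrix

attribute [local instance] Matrix.frobeniusNormedAddCommGroup

/-- Let `𝒫_Ω`, `𝒫_T` be orthogonal projections on `n × n` matrices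
with the Frobenius norm, `0 < p < 1`, `𝒬_Ω = p⁻¹ 𝒫_Ω − 𝒾`, and suppose
`‖𝒫_T 𝒬_Ω 𝒫_T‖ ≤ a` in operator norm.  Then `‖𝒬_Ω 𝒫_T‖² ≤ (a + 1)/p`. -/
theorem stmt16 (n : ℕ) (p a : ℝ) (hp0 : 0 < p) (hp1 : p < 1) (ha : 0 ≤ a)
    (PΩ PT : Matrix (Fin n) (Fin n) ℝ →ₗ[ℝ] Matrix (Fin n) (Fin n) ℝ)
    (hPΩidem : PΩ ∘ₗ PΩ = PΩ)
    (hPΩsa : ∀ X Y, Matrix.trace ((PΩ X)ᵀ * Y) = Matrix.trace (Xᵀ * PΩ Y))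
    (hPTidem : PT ∘ₗ PT = PT)
    (hPTsa : ∀ X Y, Matrix.trace ((PT X)ᵀ * Y) = Matrix.trace (Xᵀ * PT Y))
    (QΩ : Matrix (Fin n) (Fin n) ℝ →ₗ[ℝ] Matrix (Fin n) (Fin n) ℝ)
    (hQΩ : QΩ = p⁻¹ • PΩ - LinearMap.id)
    (hbound : ∀ X, ‖PT (QΩ (PT X))‖ ≤ a * ‖X‖) :
    ∀ X, ‖QΩ (PT X)‖ ^ 2 ≤ (a + 1) / p * ‖X‖ ^ 2 := by
  -- trace inner product as a sum over entries
  have hT : ∀ X Y : Matrix (Fin n) (Fin n) ℝ,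
      Matrix.trace (Xᵀ * Y) = ∑ q : Fin n × Fin n, X q.1 q.2 * Y q.1 q.2 := by
    intro X Y
    rw [Matrix.trace, Fintype.sum_prod_type]
    simp only [Matrix.diag_apply, Matrix.mul_apply, Matrix.transpose_apply]
    rw [Finset.sum_comm]
  -- norm squared
  have hnn : ∀ X : Matrix (Fin n) (Fin n) ℝ,
      ‖X‖ = Real.sqrt (∑ q : Fin n × Fin n, (X q.1 q.2) ^ 2) := by
    intro X
    rw [Matrix.frobenius_norm_def, Fintype.sum_prod_type, Real.sqrt_eq_rpow]
    congr 1
    refine Finset.sum_congr rfl fun i _ => Finset.sum_congr rfl fun j _ => ?_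
    rw [Real.rpow_two, Real.norm_eq_abs, sq_abs]
  have hsq : ∀ X : Matrix (Fin n) (Fin n) ℝ,
      Matrix.trace (Xᵀ * X) = ‖X‖ ^ 2 := by
    intro X
    rw [hT, hnn, Real.sq_sqrt (Finset.sum_nonneg fun q _ => sq_nonneg _)]
    exact Finset.sum_congr rfl fun q _ => (sq _).symm
  -- Cauchy–Schwarz
  have hCS : ∀ X Y : Matrix (Fin n) (Fin n) ℝ,
      |Matrix.trace (Xᵀ * Y)| ≤ ‖X‖ * ‖Y‖ := by
    intro X Y
    rw [hT, hnn, hnn]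
    have h := Finset.sum_mul_sq_le_sq_mul_sq Finset.univ
      (fun q : Fin n × Fin n => X q.1 q.2) (fun q : Fin n × Fin n => Y q.1 q.2)
    have := Real.sqrt_le_sqrt h
    rw [Real.sqrt_sq_eq_abs, Real.sqrt_mul (Finset.sum_nonneg fun q _ => sq_nonneg _)] at this
    exact this
  -- symmetry
  have hsym : ∀ X Y : Matrix (Fin n) (Fin n) ℝ,
      Matrix.trace (Xᵀ * Y) = Matrix.trace (Yᵀ * X) := by
    intro X Y
    rw [← Matrix.trace_transpose (Xᵀ * Y), Matrix.transpose_mul, Matrix.transpose_transpose]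
  intro X
  set Y := PT X with hY
  set Z := QΩ Y with hZ
  have hPTY : PT Y = Y := by
    rw [hY]; exact DFunLike.congr_fun hPTidem X
  -- ‖Y‖ ≤ ‖X‖
  have hYle : ‖Y‖ ≤ ‖X‖ := by
    have h1 : ‖Y‖ ^ 2 ≤ ‖X‖ * ‖Y‖ := by
      rw [← hsq]
      calc Matrix.trace (Yᵀ * Y) = Matrix.trace ((PT X)ᵀ * Y) := by rw [hY]
        _ = Matrix.trace (Xᵀ * PT Y) := hPTsa X Y
        _ = Matrix.trace (Xᵀ * Y) := by rw [hPTY]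
        _ ≤ |Matrix.trace (Xᵀ * Y)| := le_abs_self _
        _ ≤ ‖X‖ * ‖Y‖ := hCS X Y
    rcases eq_or_lt_of_le (norm_nonneg Y) with h0 | h0
    · rw [← h0]; exact norm_nonneg X
    · nlinarith
  -- |⟨Y, Z⟩| ≤ a ‖X‖²
  have hYZ : |Matrix.trace (Yᵀ * Z)| ≤ a * ‖X‖ ^ 2 := by
    have h1 : Matrix.trace (Yᵀ * Z) = Matrix.trace (Xᵀ * PT Z) := by
      rw [hY]; exact hPTsa X Z
    rw [h1]
    calc |Matrix.trace (Xᵀ * PT Z)| ≤ ‖X‖ * ‖PT Z‖ := hCS _ _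
      _ ≤ ‖X‖ * (a * ‖X‖) :=
        mul_le_mul_of_nonneg_left (by rw [hZ, hY]; exact hbound X) (norm_nonneg X)
      _ = a * ‖X‖ ^ 2 := by ring
  -- QΩ is self-adjoint
  have hQsa : ∀ U V : Matrix (Fin n) (Fin n) ℝ,
      Matrix.trace ((QΩ U)ᵀ * V) = Matrix.trace (Uᵀ * QΩ V) := by
    intro U V
    rw [hQΩ]
    simp only [LinearMap.sub_apply, LinearMap.smul_apply, LinearMap.id_apply,
      Matrix.transpose_sub, Matrix.transpose_smul, Matrix.sub_mul, Matrix.smul_mul,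
      Matrix.mul_sub, Matrix.mul_smul, Matrix.trace_sub, Matrix.trace_smul,
      hPΩsa U V]
  -- key identity: QΩ Z = p⁻¹ • ((1 - 2*p) • Z + (1 - p) • Y)
  have hQ2 : QΩ Z = p⁻¹ • ((1 - 2 * p) • Z + (1 - p) • Y) := by
    have hPP : PΩ (PΩ Y) = PΩ Y := DFunLike.congr_fun hPΩidem Y
    rw [hZ, hQΩ]
    simp only [LinearMap.sub_apply, LinearMap.smul_apply, LinearMap.id_apply,
      map_sub, _root_.map_smul, hPP]
    have hp : p ≠ 0 := ne_of_gt hp0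
    match_scalars <;> field_simp <;> ring
  -- compute ‖Z‖²
  have hmain : ‖Z‖ ^ 2 =
      p⁻¹ * ((1 - 2 * p) * Matrix.trace (Yᵀ * Z) + (1 - p) * ‖Y‖ ^ 2) := by
    rw [← hsq]
    calc Matrix.trace (Zᵀ * Z) = Matrix.trace ((QΩ Y)ᵀ * Z) := by rw [hZ]
      _ = Matrix.trace (Yᵀ * QΩ Z) := hQsa Y Z
      _ = p⁻¹ * ((1 - 2 * p) * Matrix.trace (Yᵀ * Z) + (1 - p) * ‖Y‖ ^ 2) := by
          rw [hQ2, ← hsq]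
          simp only [Matrix.mul_smul, Matrix.mul_add, Matrix.trace_smul, Matrix.trace_add,
            smul_eq_mul]
  rw [hmain]
  have hTu : Matrix.trace (Yᵀ * Z) ≤ a * ‖X‖ ^ 2 := (abs_le.1 hYZ).2
  have hTl : -(a * ‖X‖ ^ 2) ≤ Matrix.trace (Yᵀ * Z) := (abs_le.1 hYZ).1
  have hN : ‖Y‖ ^ 2 ≤ ‖X‖ ^ 2 := by nlinarith [norm_nonneg Y, norm_nonneg X]
  have hN0 : 0 ≤ ‖Y‖ ^ 2 := sq_nonneg _
  have hstep : (1 - 2 * p) * Matrix.trace (Yᵀ * Z) + (1 - p) * ‖Y‖ ^ 2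
      ≤ (a + 1) * ‖X‖ ^ 2 := by
    nlinarith [mul_nonneg hp0.le (sub_nonneg.2 hTu),
      mul_nonneg hp0.le (by linarith : (0:ℝ) ≤ Matrix.trace (Yᵀ * Z) + a * ‖X‖ ^ 2),
      mul_nonneg hp0.le hN0]
  calc p⁻¹ * ((1 - 2 * p) * Matrix.trace (Yᵀ * Z) + (1 - p) * ‖Y‖ ^ 2)
      ≤ p⁻¹ * ((a + 1) * ‖X‖ ^ 2) :=
        mul_le_mul_of_nonneg_left hstep (inv_nonneg.2 hp0.le)
    _ = (a + 1) / p * ‖X‖ ^ 2 := by rw [div_eq_mul_inv]; ring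
end

section
/- Let a₁, ..., a_n be real numbers with |a_i| ≤ α for all i. Choose a uniformly random subset S of {1,...,n} of size s (without replacement) and let Y = Σ_{i∈S} a_i. Then for every t ≥ 0, P(|Y − E[Y]| ≥ t) ≤ 2 exp(−t² / (2 s α²)). -/
/-!
By induction on `s`, the moment generating function of `Y` over uniformly random `s`-subsets of
a set `A` of size `N` satisfies `E exp (l Y) ≤ exp (l E[Y] + l² s α² / 2)`. A uniformly random
`(s + 1)`-subset is a uniformly random `s`-subset `T` together with a uniform element of `A \ T`;
Hoeffding's lemma for that element, whose mean is `(∑_A a - ∑_T a) / (N - s)`, leaves a factor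
`exp (l' ∑_T a)` with `l' = l (1 - 1 / (N - s))`, to which the bound at `s` applies, and
`l'² ≤ l²`. Chernoff's bound with `l = t / (s α²)`, applied to `a` and to `-a`, concludes.
-/

open Real Finset ProbabilityTheory MeasureTheory

theorem PMF.integral_uniformOfFintype {ι : Type*} [Fintype ι] [Nonempty ι] [MeasurableSpace ι]
    [MeasurableSingletonClass ι] (f : ι → ℝ) :
    ∫ i, f i ∂(PMF.uniformOfFintype ι).toMeasure = (∑ i, f i) / Fintype.card ι := by
  simp [PMF.integral_eq_sum, PMF.uniformOfFintype_apply, mul_sum, div_eq_inv_mul]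

theorem sum_exp_mul_le_card_mul_exp {ι : Type*} {A : Finset ι} (hA : A.Nonempty) {a : ι → ℝ}
    {α : ℝ} (ha : ∀ i ∈ A, |a i| ≤ α) (l : ℝ) :
    ∑ i ∈ A, exp (l * a i) ≤ #A * exp (l * ((∑ i ∈ A, a i) / #A) + l ^ 2 * α ^ 2 / 2) := by
  let _ : MeasurableSpace A := ⊤
  have : Nonempty A := hA.to_subtype
  set μ := (PMF.uniformOfFintype A).toMeasure
  have hcard : (0 : ℝ) < #A := by exact_mod_cast hA.card_pos
  have hmean : μ[fun i : A => a i] = (∑ i ∈ A, a i) / #A := by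
    rw [PMF.integral_uniformOfFintype, Fintype.card_coe, sum_coe_sort A a]
  have hoeffding := (hasSubgaussianMGF_of_mem_Icc (X := fun i : A => a i) (μ := μ)
    (a := -α) (b := α) (Measurable.of_discrete).aemeasurable
    (ae_of_all _ fun i => abs_le.mp (ha i i.2))).mgf_le l
  rw [mgf, PMF.integral_uniformOfFintype, hmean, Fintype.card_coe,
    sum_coe_sort A (fun i => exp (l * (a i - (∑ i ∈ A, a i) / #A)))] at hoeffding
  have hproxy : (((‖α - -α‖₊ / 2) ^ 2 : NNReal) : ℝ) = α ^ 2 := by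
    simp only [NNReal.coe_pow, NNReal.coe_div, coe_nnnorm, Real.norm_eq_abs, sub_neg_eq_add,
      NNReal.coe_ofNat]
    rw [div_pow, sq_abs]
    ring
  set m := (∑ i ∈ A, a i) / #A
  have hshift : ∑ i ∈ A, exp (l * (a i - m)) = exp (-(l * m)) * ∑ i ∈ A, exp (l * a i) := by
    rw [mul_sum]
    exact sum_congr rfl fun i _ => by rw [← exp_add]; ring_nf
  rw [hshift, hproxy, div_le_iff₀ hcard] at hoeffding
  calc ∑ i ∈ A, exp (l * a i)
      = exp (l * m) * (exp (-(l * m)) * ∑ i ∈ A, exp (l * a i)) := by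
        rw [← mul_assoc, ← exp_add, add_neg_cancel, exp_zero, one_mul]
    _ ≤ exp (l * m) * (exp (α ^ 2 * l ^ 2 / 2) * #A) := by gcongr
    _ = #A * exp (l * m + l ^ 2 * α ^ 2 / 2) := by rw [exp_add]; ring_nf

theorem succ_mul_sum_powersetCard_succ {ι : Type*} [DecidableEq ι] (A : Finset ι) (s : ℕ)
    (F : Finset ι → ℝ) :
    (s + 1 : ℝ) * ∑ S ∈ A.powersetCard (s + 1), F S
      = ∑ T ∈ A.powersetCard s, ∑ x ∈ A \ T, F (insert x T) := by
  have hlhs : (s + 1 : ℝ) * ∑ S ∈ A.powersetCard (s + 1), F S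
      = ∑ S ∈ A.powersetCard (s + 1), ∑ _x ∈ S, F S := by
    rw [mul_sum]
    refine sum_congr rfl fun S hS => ?_
    rw [sum_const, (mem_powersetCard.mp hS).2, nsmul_eq_mul]
    push_cast
    rfl
  rw [hlhs, sum_sigma', sum_sigma']
  refine sum_nbij' (fun ⟨S, x⟩ => ⟨S.erase x, x⟩) (fun ⟨T, x⟩ => ⟨insert x T, x⟩) ?_ ?_ ?_ ?_ ?_
  · rintro ⟨S, x⟩ hSx
    simp only [mem_sigma, mem_powersetCard, mem_sdiff] at hSx ⊢
    obtain ⟨⟨hSA, hScard⟩, hxS⟩ := hSx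
    exact ⟨⟨(erase_subset _ _).trans hSA, by rw [card_erase_of_mem hxS, hScard]; rfl⟩,
      hSA hxS, notMem_erase _ _⟩
  · rintro ⟨T, x⟩ hTx
    simp only [mem_sigma, mem_powersetCard, mem_sdiff] at hTx ⊢
    obtain ⟨⟨hTA, hTcard⟩, hxA, hxT⟩ := hTx
    exact ⟨⟨insert_subset hxA hTA, by rw [card_insert_of_notMem hxT, hTcard]⟩, mem_insert_self _ _⟩
  · rintro ⟨S, x⟩ hSx
    simp [insert_erase (mem_sigma.mp hSx).2]
  · rintro ⟨T, x⟩ hTx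
    simp [erase_insert (mem_sdiff.mp (mem_sigma.mp hTx).2).2]
  · rintro ⟨S, x⟩ hSx
    simp [insert_erase (mem_sigma.mp hSx).2]

theorem card_filter_le_exp_mul_sum_exp {β : Type*} {P : Finset β} {p : β → Prop}
    [DecidablePred p] {f : β → ℝ} {c l : ℝ} (hp : ∀ x ∈ P, p x → c ≤ f x) (hl : 0 ≤ l) :
    (#{x ∈ P | p x} : ℝ) ≤ exp (-(l * c)) * ∑ x ∈ P, exp (l * f x) := by
  rw [exp_neg, ← div_eq_inv_mul, le_div_iff₀ (exp_pos _)]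
  calc (#{x ∈ P | p x} : ℝ) * exp (l * c)
      = ∑ _x ∈ P with p _x, exp (l * c) := by rw [sum_const, nsmul_eq_mul]
    _ ≤ ∑ x ∈ P with p x, exp (l * f x) := by
        refine sum_le_sum fun x hx => ?_
        have hx := mem_filter.mp hx
        gcongr
        exact hp x hx.1 hx.2
    _ ≤ ∑ x ∈ P, exp (l * f x) :=
        sum_le_sum_of_subset_of_nonneg (filter_subset _ _) fun _ _ _ => (exp_pos _).le

section Sampling

variable {ι : Type*} [DecidableEq ι] {A : Finset ι} {a : ι → ℝ} {α : ℝ}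

theorem sum_powersetCard_succ_exp_le (ha : ∀ i ∈ A, |a i| ≤ α) {s : ℕ} (hs : s + 1 ≤ #A)
    (ih : ∀ l : ℝ, ∑ T ∈ A.powersetCard s, exp (l * ∑ i ∈ T, a i)
      ≤ (#A).choose s * exp (l * (s / #A) * ∑ i ∈ A, a i + l ^ 2 * s * α ^ 2 / 2))
    (l : ℝ) :
    ∑ S ∈ A.powersetCard (s + 1), exp (l * ∑ i ∈ S, a i)
      ≤ (#A).choose (s + 1) * exp (l * ((s + 1 : ℕ) / #A) * ∑ i ∈ A, a i
          + l ^ 2 * (s + 1 : ℕ) * α ^ 2 / 2) := by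
  set N : ℝ := ((#A : ℕ) : ℝ)
  set K : ℝ := N - s with hKN
  set Sa := ∑ i ∈ A, a i
  have hsN : (s : ℝ) + 1 ≤ N := by simp only [N]; exact_mod_cast hs
  have hK : 1 ≤ K := by linarith
  have hK0 : K ≠ 0 := (zero_lt_one.trans_le hK).ne'
  have hN0 : N ≠ 0 := ((by positivity : (0 : ℝ) < s + 1).trans_le hsN).ne'
  set l' := l * (K - 1) / K with hl'
  have hsubset_bound : ∀ T ∈ A.powersetCard s,
      exp (l * ∑ i ∈ T, a i) * ∑ x ∈ A \ T, exp (l * a x)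
        ≤ K * exp (l * Sa / K + l ^ 2 * α ^ 2 / 2) * exp (l' * ∑ i ∈ T, a i) := by
    intro T hT
    obtain ⟨hTA, hTcard⟩ := mem_powersetCard.mp hT
    have hcard : (#(A \ T) : ℝ) = K := by
      rw [card_sdiff_of_subset hTA, hTcard, Nat.cast_sub (by omega)]
    have hne : (A \ T).Nonempty := by
      rw [← card_pos, card_sdiff_of_subset hTA]
      omega
    have h := sum_exp_mul_le_card_mul_exp hne (fun i hi => ha i (mem_sdiff.mp hi).1) l
    rw [hcard, sum_sdiff_eq_sub hTA (f := a)] at h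
    calc exp (l * ∑ i ∈ T, a i) * ∑ x ∈ A \ T, exp (l * a x)
        ≤ exp (l * ∑ i ∈ T, a i)
            * (K * exp (l * ((Sa - ∑ i ∈ T, a i) / K) + l ^ 2 * α ^ 2 / 2)) := by
          gcongr
      _ = K * exp (l * Sa / K + l ^ 2 * α ^ 2 / 2) * exp (l' * ∑ i ∈ T, a i) := by
          rw [mul_left_comm, ← exp_add, mul_assoc, ← exp_add]
          congr 2
          rw [hl']
          field_simp
          ring
  have hchoose : K * (#A).choose s = (s + 1) * (#A).choose (s + 1) := by
    have h := congrArg (Nat.cast (R := ℝ)) (Nat.choose_succ_right_eq (#A) s)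
    push_cast [Nat.cast_sub (by omega : s ≤ #A)] at h
    linarith
  have hexponent : l * Sa / K + l ^ 2 * α ^ 2 / 2 + (l' * (s / N) * Sa + l' ^ 2 * s * α ^ 2 / 2)
      ≤ l * ((s + 1 : ℕ) / N) * Sa + l ^ 2 * (s + 1 : ℕ) * α ^ 2 / 2 := by
    have hl'_sq : l' ^ 2 ≤ l ^ 2 := by
      rw [div_pow, mul_pow, div_le_iff₀ (by positivity)]
      nlinarith [sq_nonneg l]
    have hmean : l * Sa / K + l' * (s / N) * Sa = l * ((s + 1 : ℕ) / N) * Sa := by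
      rw [hl']
      push_cast
      field_simp
      rw [hKN]
      ring
    push_cast at hmean ⊢
    nlinarith [mul_le_mul_of_nonneg_right hl'_sq (by positivity : (0 : ℝ) ≤ s * α ^ 2)]
  refine le_of_mul_le_mul_left ?_ (by positivity : (0 : ℝ) < s + 1)
  calc (s + 1 : ℝ) * ∑ S ∈ A.powersetCard (s + 1), exp (l * ∑ i ∈ S, a i)
      = ∑ T ∈ A.powersetCard s, exp (l * ∑ i ∈ T, a i) * ∑ x ∈ A \ T, exp (l * a x) := by
        rw [succ_mul_sum_powersetCard_succ]
        refine sum_congr rfl fun T _ => ?_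
        rw [mul_sum]
        refine sum_congr rfl fun x hx => ?_
        rw [sum_insert (mem_sdiff.mp hx).2, mul_add, exp_add, mul_comm]
    _ ≤ ∑ T ∈ A.powersetCard s,
          K * exp (l * Sa / K + l ^ 2 * α ^ 2 / 2) * exp (l' * ∑ i ∈ T, a i) :=
        sum_le_sum hsubset_bound
    _ ≤ K * exp (l * Sa / K + l ^ 2 * α ^ 2 / 2)
          * ((#A).choose s * exp (l' * (s / N) * Sa + l' ^ 2 * s * α ^ 2 / 2)) := by
        rw [← mul_sum]
        gcongr
        exact ih l'
    _ = K * (#A).choose s * exp (l * Sa / K + l ^ 2 * α ^ 2 / 2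
          + (l' * (s / N) * Sa + l' ^ 2 * s * α ^ 2 / 2)) := by
        simp only [exp_add]
        ring
    _ ≤ (s + 1) * ((#A).choose (s + 1) * exp (l * ((s + 1 : ℕ) / N) * Sa
          + l ^ 2 * (s + 1 : ℕ) * α ^ 2 / 2)) := by
        rw [hchoose, mul_assoc]
        gcongr

theorem sum_powersetCard_exp_mul_sum_le (ha : ∀ i ∈ A, |a i| ≤ α) {s : ℕ} (hs : s ≤ #A)
    (l : ℝ) :
    ∑ S ∈ A.powersetCard s, exp (l * ∑ i ∈ S, a i)
      ≤ (#A).choose s * exp (l * (s / #A) * ∑ i ∈ A, a i + l ^ 2 * s * α ^ 2 / 2) := by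
  induction s generalizing l with
  | zero => simp
  | succ s ih => exact sum_powersetCard_succ_exp_le ha hs (ih (by omega)) l

theorem card_filter_le_choose_mul_exp (ha : ∀ i ∈ A, |a i| ≤ α) {s : ℕ} (hs : s ≤ #A)
    (hs0 : s ≠ 0) (hα : α ≠ 0) {t : ℝ} (ht : 0 ≤ t) :
    (#{S ∈ A.powersetCard s | t ≤ ∑ i ∈ S, a i - (s / #A : ℝ) * ∑ i ∈ A, a i} : ℝ)
      ≤ (#A).choose s * exp (-t ^ 2 / (2 * s * α ^ 2)) := by
  set E := (s / #A : ℝ) * ∑ i ∈ A, a i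
  set l := t / (s * α ^ 2)
  have hl : 0 ≤ l := by positivity
  calc (#{S ∈ A.powersetCard s | t ≤ ∑ i ∈ S, a i - E} : ℝ)
      ≤ exp (-(l * (t + E))) * ∑ S ∈ A.powersetCard s, exp (l * ∑ i ∈ S, a i) :=
        card_filter_le_exp_mul_sum_exp (fun S _ hS => by linarith) hl
    _ ≤ exp (-(l * (t + E))) * ((#A).choose s * exp (l * E + l ^ 2 * s * α ^ 2 / 2)) := by
        gcongr
        simpa only [E, mul_assoc] using sum_powersetCard_exp_mul_sum_le ha hs l
    _ = (#A).choose s * exp (-t ^ 2 / (2 * s * α ^ 2)) := by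
        rw [mul_left_comm, ← exp_add]
        congr 2
        simp only [l]
        field_simp
        ring

end Sampling

/-- McDiarmid / sampling without replacement: For reals
`a_1, …, a_n` with `|a_i| ≤ α`, if `S` is a uniformly random `s`-element subset
of `[n]` and `Y = Σ_{i∈S} a_i` (with `E[Y] = (s/n) Σ_i a_i`), then for `t ≥ 0`,
`P(|Y − E[Y]| ≥ t) ≤ 2 exp(−t²/(2 s α²))`.  Here the probability is expressed
by counting `s`-element subsets. -/
theorem stmt17 (n s : ℕ) (hs : s ≤ n) (a : Fin n → ℝ) (α t : ℝ)
    (hα : ∀ i, |a i| ≤ α) (ht : 0 ≤ t) :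
    (((Finset.powersetCard s (Finset.univ : Finset (Fin n))).filter
        (fun S => t ≤ |(∑ i ∈ S, a i) - (s / n : ℝ) * ∑ i, a i|)).card : ℝ) /
      ((Finset.powersetCard s (Finset.univ : Finset (Fin n))).card : ℝ)
    ≤ 2 * Real.exp (-(t ^ 2) / (2 * s * α ^ 2)) := by
  set P := powersetCard s (univ : Finset (Fin n))
  have hP : (#P : ℝ) = n.choose s := by simp [P]
  rw [hP, div_le_iff₀ (by exact_mod_cast Nat.choose_pos hs)]
  -- for `s = 0` or `α = 0` the exponent divides by zero, so the bound reads `≤ 2`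
  by_cases hdeg : s = 0 ∨ α = 0
  · have hexp : -t ^ 2 / (2 * s * α ^ 2) = 0 := by rcases hdeg with h | h <;> simp [h]
    have hcard : #{S ∈ P | t ≤ |∑ i ∈ S, a i - (s / n : ℝ) * ∑ i, a i|} ≤ #P :=
      card_le_card (filter_subset _ _)
    rw [hexp, exp_zero, ← hP]
    have : (0 : ℝ) ≤ #P := by positivity
    linarith [(Nat.cast_le (α := ℝ)).mpr hcard]
  push Not at hdeg
  have hupper := card_filter_le_choose_mul_exp (A := univ) (fun i _ => hα i) (by simpa using hs)
    hdeg.1 hdeg.2 ht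
  have hlower := card_filter_le_choose_mul_exp (A := univ) (a := fun i => -a i)
    (fun i _ => by simpa using hα i) (by simpa using hs) hdeg.1 hdeg.2 ht
  simp only [card_univ, Fintype.card_fin, sum_neg_distrib, mul_neg, sub_neg_eq_add,
    neg_add_eq_sub] at hupper hlower
  calc (#{S ∈ P | t ≤ |∑ i ∈ S, a i - (s / n : ℝ) * ∑ i, a i|} : ℝ)
      ≤ #{S ∈ P | t ≤ ∑ i ∈ S, a i - (s / n : ℝ) * ∑ i, a i}
        + #{S ∈ P | t ≤ (s / n : ℝ) * ∑ i, a i - ∑ i ∈ S, a i} := by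
        simp_rw [le_abs, neg_sub, filter_or]
        exact_mod_cast card_union_le _ _
    _ ≤ 2 * exp (-t ^ 2 / (2 * s * α ^ 2)) * n.choose s := by linarith
end

section
/- Under the strong incoherence assumptions A1 and A2 with parameter μ (i.e., |⟨e_a, P_U e_{a'}⟩ − (r/n)1_{a=a'}| ≤ μ√r/n, similarly for P_V, and |E_{ab}| ≤ μ√r/n), the coefficients c_{ab,a'b'} := ⟨e_a e_b*, 𝒬_T(e_{a'} e_{b'}*)⟩ of the operator 𝒬_T = 𝒫_T − ρ'𝒾 satisfy c_{ab,a'b'} = (1−ρ) 1_{b=b'} U_{a,a'} + (1−ρ) 1_{a=a'} V_{b,b'} − U_{a,a'} V_{b,b'}, and consequently |c_{ab,a'b'}| ≤ C [ (1_{a=a'} + 1_{b=b'}) μ√r/n + μ²r/n² ] for an absolute constant C. -/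
/-!
Expanding `Q_U = P_U - ρ I` and `Q_V = P_V - ρ I` turns `𝒬_T(X) = 𝒫_T(X) - (2ρ - ρ²) X` into
`(1 - ρ) Q_U X + (1 - ρ) X Q_V - Q_U X Q_V`, an identity in any algebra; at `X = e_{a'} e_{b'}*`
its `(a, b)` entry is the claimed formula, with `V_{b',b} = V_{b,b'}` by symmetry of `P_V`.
For the bound, A1 gives `|U_{a,a'}|, |V_{b,b'}| ≤ μ√r/n`, and `0 ≤ ρ ≤ 1` because the diagonal
entries `P_{ii} = ∑_k P_{ik}²` of an orthogonal projection lie in `[0, 1]`, so `r = tr P_V ≤ n`.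
Hence `C = 1` works.
-/

open Matrix

section
variable {R A : Type*} [CommRing R] [Ring A] [Algebra R A]

def tangentProj (p q x : A) : A := p * x + x * q - p * x * q

theorem tangentProj_sub_smul_eq (ρ : R) (p q x : A) :
    tangentProj p q x - (2 * ρ - ρ ^ 2) • x =
      (1 - ρ) • ((p - ρ • 1) * x) + (1 - ρ) • (x * (q - ρ • 1))
        - (p - ρ • 1) * x * (q - ρ • 1) := by
  simp only [tangentProj, sub_mul, mul_sub, smul_mul_assoc, mul_smul_comm, one_mul, mul_one,
    smul_sub, smul_smul]
  module
end

section
variable {R : Type*} [CommRing R] [LinearOrder R] [IsStrictOrderedRing R]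
  {ι : Type*} [Fintype ι] {A : Matrix ι ι R}

theorem diag_le_one_of_transpose_eq_of_mul_self (hsymm : Aᵀ = A) (hidem : A * A = A) (i : ι) :
    A i i ≤ 1 := by
  have hsq : A i i ^ 2 ≤ A i i := calc
    A i i ^ 2 ≤ ∑ k, A i k ^ 2 :=
      Finset.single_le_sum (f := fun k => A i k ^ 2) (fun k _ => sq_nonneg _) (Finset.mem_univ i)
    _ = A i i := by
      conv_rhs => rw [← hidem, mul_apply]
      refine Finset.sum_congr rfl fun k _ => ?_
      rw [sq, ← transpose_apply A k i, hsymm]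
  nlinarith

theorem trace_le_card_of_transpose_eq_of_mul_self (hsymm : Aᵀ = A) (hidem : A * A = A) :
    A.trace ≤ Fintype.card ι := by
  simpa [trace] using Finset.sum_le_sum fun i (_ : i ∈ Finset.univ) =>
    diag_le_one_of_transpose_eq_of_mul_self hsymm hidem i
end

theorem mul_single_mul_apply {R l m n o : Type*} [Fintype m] [Fintype n] [DecidableEq m]
    [DecidableEq n] [NonUnitalNonAssocSemiring R] (A : Matrix l m R) (B : Matrix n o R)
    (i : m) (j : n) (k : l) (k' : o) (c : R) :
    (A * single i j c * B) k k' = A k i * c * B j k' := by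
  simp [mul_apply, single, ite_and]

theorem abs_mul_mul_add_mul_mul_sub_mul_le {s d₁ d₂ u v t : ℝ} (hs : |s| ≤ 1) (hd₁ : 0 ≤ d₁)
    (hd₂ : 0 ≤ d₂) (hu : |u| ≤ t) (hv : |v| ≤ t) :
    |s * d₁ * u + s * d₂ * v - u * v| ≤ (d₂ + d₁) * t + t ^ 2 := by
  have ht : 0 ≤ t := (abs_nonneg u).trans hu
  calc |s * d₁ * u + s * d₂ * v - u * v| ≤ |s| * d₁ * |u| + |s| * d₂ * |v| + |u| * |v| := by
        refine (abs_sub _ _).trans (add_le_add ((abs_add_le _ _).trans_eq ?_) (abs_mul u v).le)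
        simp only [abs_mul, abs_of_nonneg hd₁, abs_of_nonneg hd₂]
    _ ≤ 1 * d₁ * t + 1 * d₂ * t + t * t := by gcongr
    _ = (d₂ + d₁) * t + t ^ 2 := by ring

theorem stmt18_general (n r : ℕ) (μ : ℝ)
    (PU PV : Matrix (Fin n) (Fin n) ℝ)
    (hPVsymm : PVᵀ = PV) (hPVidem : PV * PV = PV) (hPVtr : PV.trace = r)
    (hA1U : ∀ a a' : Fin n,
      |PU a a' - ((r : ℝ) / n) * (if a = a' then 1 else 0)| ≤ μ * Real.sqrt r / n)
    (hA1V : ∀ b b' : Fin n,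
      |PV b b' - ((r : ℝ) / n) * (if b = b' then 1 else 0)| ≤ μ * Real.sqrt r / n)
    (ρ ρ' : ℝ) (hρ : ρ = (r : ℝ) / n) (hρ' : ρ' = 2 * ρ - ρ ^ 2)
    (QU QV : Matrix (Fin n) (Fin n) ℝ)
    (hQU : QU = PU - ρ • (1 : Matrix (Fin n) (Fin n) ℝ))
    (hQV : QV = PV - ρ • (1 : Matrix (Fin n) (Fin n) ℝ))
    (PT QT : Matrix (Fin n) (Fin n) ℝ → Matrix (Fin n) (Fin n) ℝ)
    (hPT : ∀ X, PT X = PU * X + X * PV - PU * X * PV)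
    (hQT : ∀ X, QT X = PT X - ρ' • X)
    (c : Fin n → Fin n → Fin n → Fin n → ℝ)
    (hc : ∀ a b a' b', c a b a' b' = QT (Matrix.single a' b' (1 : ℝ)) a b) :
    (∀ a b a' b' : Fin n,
      c a b a' b' =
        (1 - ρ) * (if b = b' then 1 else 0) * QU a a'
        + (1 - ρ) * (if a = a' then 1 else 0) * QV b b'
        - QU a a' * QV b b') ∧
    (∃ C : ℝ, 0 < C ∧ ∀ a b a' b' : Fin n,
      |c a b a' b'| ≤ C * (((if a = a' then (1 : ℝ) else 0) + (if b = b' then 1 else 0))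
          * (μ * Real.sqrt r / n) + μ ^ 2 * r / n ^ 2)) := by
  have hQVsymm : QVᵀ = QV := by rw [hQV, transpose_sub, transpose_smul, transpose_one, hPVsymm]
  have hformula : ∀ a b a' b' : Fin n, c a b a' b' =
      (1 - ρ) * (if b = b' then 1 else 0) * QU a a'
        + (1 - ρ) * (if a = a' then 1 else 0) * QV b b' - QU a a' * QV b b' := by
    intro a b a' b'
    have hQTsingle : QT (single a' b' 1) = (1 - ρ) • (QU * single a' b' 1 * 1)
        + (1 - ρ) • (1 * single a' b' 1 * QV) - QU * single a' b' 1 * QV := by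
      rw [hQT, hPT, hρ', hQU, hQV, mul_one, one_mul]
      exact tangentProj_sub_smul_eq ρ PU PV _
    rw [hc, hQTsingle, Matrix.sub_apply, Matrix.add_apply, Matrix.smul_apply, Matrix.smul_apply,
      mul_single_mul_apply, mul_single_mul_apply, mul_single_mul_apply,
      ← transpose_apply QV b', hQVsymm]
    simp only [one_apply, eq_comm (a := b'), smul_eq_mul]
    ring
  have hρ_le : |1 - ρ| ≤ 1 := by
    have hr : (r : ℝ) ≤ n := by
      simpa [hPVtr] using trace_le_card_of_transpose_eq_of_mul_self hPVsymm hPVidem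
    have : ρ ≤ 1 := hρ ▸ div_le_one_of_le₀ hr n.cast_nonneg
    have : 0 ≤ ρ := hρ ▸ by positivity
    rw [abs_le]; constructor <;> linarith
  set t := μ * Real.sqrt r / n
  have ht_sq : t ^ 2 = μ ^ 2 * r / n ^ 2 := by
    rw [div_pow, mul_pow, Real.sq_sqrt r.cast_nonneg]
  have hQU_le : ∀ a a', |QU a a'| ≤ t := fun a a' => by
    simpa only [hQU, hρ, Matrix.sub_apply, Matrix.smul_apply, one_apply, smul_eq_mul]
      using hA1U a a'
  have hQV_le : ∀ b b', |QV b b'| ≤ t := fun b b' => by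
    simpa only [hQV, hρ, Matrix.sub_apply, Matrix.smul_apply, one_apply, smul_eq_mul]
      using hA1V b b'
  refine ⟨hformula, 1, one_pos, fun a b a' b' => ?_⟩
  rw [hformula, one_mul, ← ht_sq]
  exact abs_mul_mul_add_mul_mul_sub_mul_le hρ_le (by positivity) (by positivity)
    (hQU_le a a') (hQV_le b b')

/-- Under the strong incoherence assumptions A1, A2 with parameter
`μ`, the coefficients `c_{ab,a'b'} = ⟨e_a e_b*, 𝒬_T(e_{a'} e_{b'}*)⟩` of the
operator `𝒬_T = 𝒫_T − ρ'𝒾` satisfy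
`c_{ab,a'b'} = (1−ρ) 1_{b=b'} U_{a,a'} + (1−ρ) 1_{a=a'} V_{b,b'} − U_{a,a'} V_{b,b'}`,
and consequently
`|c_{ab,a'b'}| ≤ C [(1_{a=a'} + 1_{b=b'}) μ√r/n + μ²r/n²]` for an absolute
constant `C`. -/
theorem stmt18 (n r : ℕ) (μ : ℝ)
    (PU PV : Matrix (Fin n) (Fin n) ℝ)
    (hPUsymm : PUᵀ = PU) (hPUidem : PU * PU = PU) (hPUtr : PU.trace = r)
    (hPVsymm : PVᵀ = PV) (hPVidem : PV * PV = PV) (hPVtr : PV.trace = r)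
    (E : Matrix (Fin n) (Fin n) ℝ)
    (hA1U : ∀ a a' : Fin n,
      |PU a a' - ((r : ℝ) / n) * (if a = a' then 1 else 0)| ≤ μ * Real.sqrt r / n)
    (hA1V : ∀ b b' : Fin n,
      |PV b b' - ((r : ℝ) / n) * (if b = b' then 1 else 0)| ≤ μ * Real.sqrt r / n)
    (hA2 : ∀ a b : Fin n, |E a b| ≤ μ * Real.sqrt r / n)
    (ρ ρ' : ℝ) (hρ : ρ = (r : ℝ) / n) (hρ' : ρ' = 2 * ρ - ρ ^ 2)
    (QU QV : Matrix (Fin n) (Fin n) ℝ)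
    (hQU : QU = PU - ρ • (1 : Matrix (Fin n) (Fin n) ℝ))
    (hQV : QV = PV - ρ • (1 : Matrix (Fin n) (Fin n) ℝ))
    (PT QT : Matrix (Fin n) (Fin n) ℝ → Matrix (Fin n) (Fin n) ℝ)
    (hPT : ∀ X, PT X = PU * X + X * PV - PU * X * PV)
    (hQT : ∀ X, QT X = PT X - ρ' • X)
    (c : Fin n → Fin n → Fin n → Fin n → ℝ)
    (hc : ∀ a b a' b', c a b a' b' = QT (Matrix.single a' b' (1 : ℝ)) a b) :
    (∀ a b a' b' : Fin n,
      c a b a' b' =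
        (1 - ρ) * (if b = b' then 1 else 0) * QU a a'
        + (1 - ρ) * (if a = a' then 1 else 0) * QV b b'
        - QU a a' * QV b b') ∧
    (∃ C : ℝ, 0 < C ∧ ∀ a b a' b' : Fin n,
      |c a b a' b'| ≤ C * (((if a = a' then (1 : ℝ) else 0) + (if b = b' then 1 else 0))
          * (μ * Real.sqrt r / n) + μ ^ 2 * r / n ^ 2)) :=
  stmt18_general n r μ PU PV hPVsymm hPVidem hPVtr hA1U hA1V ρ ρ' hρ hρ' QU QV hQU hQV PT QT hPT hQT
    c hc
end
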